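/- arXiv:1204.5536 — 2 statements merged into one kernel-verified Lean document; each statement's English description precedes it below -/
import Mathlib

section
/- Suppose the penalty P_n satisfies Assumption 4.1 (in particular P_n is concave with nonincreasing continuous derivative P_n' on (0,∞)). If β = (β_1,…,β_s) ∈ ℝ^s satisfies max_{j≤s} |β_j − β_{0S,j}| ≤ d_n, then |Σ_{j=1}^s (P_n(|β_j|) − P_n(|β_{0S,j}|))| ≤ ‖β − β_{0S}‖ · √s · P_n'(d_n). -/
/-!
Every coordinate of `β` and of `β0S` has modulus at least `d`, so only the behaviour of `P` on
`[d, ∞)` matters. There `P` is concave and nondecreasing, hence `0 ≤ P' t ≤ P' d`, and the mean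
value inequality makes `P` a `P' d`-Lipschitz function on `[d, ∞)`. Summing the coordinatewise
bounds and applying Cauchy–Schwarz to `∑ |β j - β0S j|` gives the factor `‖β - β0S‖ √s`.
-/

open Set

section ConcaveDeriv

variable {S : Set ℝ} {f f' : ℝ → ℝ}

theorem ConcaveOn.antitoneOn_of_hasDerivAt (hfc : ConcaveOn ℝ S f)
    (hf : ∀ x ∈ S, HasDerivAt f (f' x) x) : AntitoneOn f' S := by
  intro x hx y hy hxy
  have := hfc.antitoneOn_deriv (fun t ht => (hf t ht).differentiableAt) hx hy hxy
  rwa [(hf x hx).deriv, (hf y hy).deriv] at this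

theorem ConcaveOn.nonneg_of_hasDerivAt_of_monotoneOn (hfc : ConcaveOn ℝ S f)
    (hmono : MonotoneOn f S) {x y : ℝ} (hx : x ∈ S) (hy : y ∈ S) (hxy : x < y)
    (hf : HasDerivAt f (f' x) x) : 0 ≤ f' x :=
  (hmono.slope_nonneg hx hy).trans (hfc.slope_le_of_hasDerivAt hx hy hxy hf)

theorem ConcaveOn.abs_sub_le_of_monotoneOn_Ici {d x y : ℝ} (hfc : ConcaveOn ℝ (Ici d) f)
    (hmono : MonotoneOn f (Ici d)) (hf : ∀ t ∈ Ici d, HasDerivAt f (f' t) t)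
    (hx : d ≤ x) (hy : d ≤ y) : |f x - f y| ≤ f' d * |x - y| := by
  have hbound : ∀ t ∈ Ici d, ‖f' t‖ ≤ f' d := fun t ht => by
    have hnonneg : 0 ≤ f' t := hfc.nonneg_of_hasDerivAt_of_monotoneOn hmono ht
      (mem_Ici.2 (le_add_of_le_of_nonneg (mem_Ici.1 ht) zero_le_one)) (lt_add_one t) (hf t ht)
    rw [Real.norm_of_nonneg hnonneg]
    exact hfc.antitoneOn_of_hasDerivAt hf self_mem_Ici ht ht
  simpa only [Real.norm_eq_abs] using (convex_Ici d).norm_image_sub_le_of_norm_hasDerivWithin_le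
    (fun t ht => (hf t ht).hasDerivWithinAt) hbound (mem_Ici.2 hy) (mem_Ici.2 hx)

end ConcaveDeriv

theorem EuclideanSpace.sum_abs_le_sqrt_card_mul_norm {ι : Type*} [Fintype ι]
    (x : EuclideanSpace ℝ ι) : ∑ i, |x i| ≤ √(Fintype.card ι) * ‖x‖ := by
  have := Real.sum_mul_le_sqrt_mul_sqrt Finset.univ (fun _ => (1 : ℝ)) (fun i => |x i|)
  rw [EuclideanSpace.norm_eq]
  simpa only [one_mul, one_pow, Finset.sum_const, Finset.card_univ, nsmul_eq_mul, mul_one,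
    sq_abs, Real.norm_eq_abs] using this

theorem statement_10_general
    (s : ℕ) (hs : 0 < s)
    (P P' : ℝ → ℝ)
    (hconc : ConcaveOn ℝ (Set.Ici 0) P)
    (hmono : MonotoneOn P (Set.Ici 0))
    (hderiv : ∀ t : ℝ, 0 < t → HasDerivAt P (P' t) t)
    (β0S : EuclideanSpace ℝ (Fin s))
    (hnz : ∀ j, β0S j ≠ 0)
    (d : ℝ) (hd : d = (1/2) * ⨅ j : Fin s, |β0S j|)
    (β : EuclideanSpace ℝ (Fin s))
    (hclose : ∀ j, |β j - β0S j| ≤ d) :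
    |∑ j, (P |β j| - P |β0S j|)| ≤ ‖β - β0S‖ * Real.sqrt s * P' d := by
  have : Nonempty (Fin s) := ⟨⟨0, hs⟩⟩
  have h2d : ∀ j, 2 * d ≤ |β0S j| := fun j => by
    rw [hd]; linarith [ciInf_le (Finite.bddBelow_range fun j => |β0S j|) j]
  have hd_pos : 0 < d := by
    obtain ⟨j, hj⟩ := exists_eq_ciInf_of_finite (f := fun j => |β0S j|)
    rw [hd, ← hj]; linarith [abs_pos.2 (hnz j)]
  have hIci : Ici d ⊆ Ici 0 := Ici_subset_Ici.2 hd_pos.le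
  have hP'd : 0 ≤ P' d := hconc.nonneg_of_hasDerivAt_of_monotoneOn hmono (hIci self_mem_Ici)
    (mem_Ici.2 (by linarith)) (by linarith) (hderiv d hd_pos)
  have hcoord : ∀ j, |P (|β j|) - P (|β0S j|)| ≤ P' d * |(β - β0S) j| := fun j => by
    have hβ : d ≤ |β j| := by
      linarith [h2d j, hclose j, abs_sub_abs_le_abs_sub (β0S j) (β j),
        abs_sub_comm (β j) (β0S j)]
    calc |P (|β j|) - P (|β0S j|)|
        ≤ P' d * |(|β j| - |β0S j|)| :=
          (hconc.subset hIci (convex_Ici d)).abs_sub_le_of_monotoneOn_Ici (hmono.mono hIci)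
            (fun t ht => hderiv t (hd_pos.trans_le ht)) hβ (by linarith [h2d j])
      _ ≤ P' d * |(β - β0S) j| :=
          mul_le_mul_of_nonneg_left (abs_abs_sub_abs_le_abs_sub (β j) (β0S j)) hP'd
  calc |∑ j, (P |β j| - P |β0S j|)|
      ≤ ∑ j, |P (|β j|) - P (|β0S j|)| := Finset.abs_sum_le_sum_abs _ _
    _ ≤ ∑ j, P' d * |(β - β0S) j| := Finset.sum_le_sum fun j _ => hcoord j
    _ = P' d * ∑ j, |(β - β0S) j| := (Finset.mul_sum _ _ _).symm
    _ ≤ P' d * (√s * ‖β - β0S‖) := by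
        gcongr
        simpa only [Fintype.card_fin] using (β - β0S).sum_abs_le_sqrt_card_mul_norm
    _ = ‖β - β0S‖ * Real.sqrt s * P' d := by ring

/-- **Lemma B.1**.  Let `P` be a penalty with `P(0) = 0`, concave and
nondecreasing on `[0,∞)` with continuous derivative `P'` on `(0,∞)`.  Let
`β_{0S} ∈ ℝ^s` have all coordinates nonzero and `d = (1/2) min_j |β_{0S,j}|`.
If `max_j |β_j − β_{0S,j}| ≤ d` then
`|Σ_j (P(|β_j|) − P(|β_{0S,j}|))| ≤ ‖β − β_{0S}‖ √s P'(d)`. -/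
theorem statement_10
    (s : ℕ) (hs : 0 < s)
    (P P' : ℝ → ℝ)
    (hP0 : P 0 = 0)
    (hconc : ConcaveOn ℝ (Set.Ici 0) P)
    (hmono : MonotoneOn P (Set.Ici 0))
    (hderiv : ∀ t : ℝ, 0 < t → HasDerivAt P (P' t) t)
    (hcont : ContinuousOn P' (Set.Ioi 0))
    (β0S : EuclideanSpace ℝ (Fin s))
    (hnz : ∀ j, β0S j ≠ 0)
    (d : ℝ) (hd : d = (1/2) * ⨅ j : Fin s, |β0S j|)
    (β : EuclideanSpace ℝ (Fin s))
    (hclose : ∀ j, |β j - β0S j| ≤ d) :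
    |∑ j, (P |β j| - P |β0S j|)| ≤ ‖β - β0S‖ * Real.sqrt s * P' d :=
  statement_10_general s hs P P' hconc hmono hderiv β0S hnz d hd β hclose
end

section
/- Suppose Assumption 4.1 holds and β̂_S is an estimator satisfying ‖β̂_S − β_{0S}‖ = O_p(√(s log p / n) + √s·P_n'(d_n)) with √(s log p / n) + √s·P_n'(d_n) = o(d_n). Then ‖P_n'(|β̂_S|) ∘ sgn(β̂_S)‖ = O_p( sup_{‖β − β_{0S}‖ ≤ d_n/4} η(β) · √(s log p / n) + √s · P_n'(d_n) ), where P_n'(|β̂_S|) ∘ sgn(β̂_S) denotes the vector with components P_n'(|β̂_{Sj}|)·sgn(β̂_{Sj}), j = 1,…,s. -/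
/- Appendix B of Fan & Liao, "Endogeneity in high dimensions":
   general theory for penalized regressions with nonsmooth/general losses. -/

open MeasureTheory Filter Topology

noncomputable section

namespace FanLiaoB

/-- `Z_n = O_p(a_n)`. -/
def IsBigOp {Ω : Type*} [MeasureSpace Ω] (Z : ℕ → Ω → ℝ) (a : ℕ → ℝ) : Prop :=
  ∀ ε : ℝ, 0 < ε → ∃ M : ℝ, 0 < M ∧ ∀ᶠ n in Filter.atTop,
    (volume {ω | M * a n < |Z n ω|}).toReal ≤ ε

/-- `a` is a strict local minimizer of `f`. -/
def IsStrictLocalMin {E : Type*} [TopologicalSpace E] (f : E → ℝ) (a : E) : Prop :=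
  ∀ᶠ x in nhdsWithin a {a}ᶜ, f a < f x

/-- The local concavity `η(β)` of a penalty with derivative `P'`. -/
def eta {k : ℕ} (P' : ℝ → ℝ) (β : EuclideanSpace ℝ (Fin k)) : ℝ :=
  Filter.limsup (fun ε : ℝ =>
      ⨆ j : Fin k, sSup {r : ℝ | ∃ t₁ t₂ : ℝ, t₁ < t₂ ∧
        t₁ ∈ Set.Ioo (|β j| - ε) (|β j| + ε) ∧ t₂ ∈ Set.Ioo (|β j| - ε) (|β j| + ε) ∧
        r = -((P' t₂ - P' t₁) / (t₂ - t₁))})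
    (nhdsWithin 0 (Set.Ioi 0))

/-- Sparse penalized-regression setup: for each `n`, a (random) loss `L_n` on
`ℝ^{p_n}`, a true parameter `β₀` with support `S` of size `s_n`, and a penalty
`P_n` with derivative `P_n'`. -/
structure Setup (Ω : Type*) [MeasureSpace Ω] where
  p : ℕ → ℕ
  s : ℕ → ℕ
  β0 : ∀ n : ℕ, EuclideanSpace ℝ (Fin (p n))
  S : ∀ n : ℕ, Finset (Fin (p n))
  idx : ∀ n : ℕ, Fin (s n) → Fin (p n)
  L : ∀ n : ℕ, Ω → EuclideanSpace ℝ (Fin (p n)) → ℝ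
  P : ℕ → ℝ → ℝ
  P' : ℕ → ℝ → ℝ

variable {Ω : Type*} [MeasureSpace Ω]

/-- minimal signal strength `d_n = (1/2) min_{j ∈ S} |β_{0j}|` -/
def d (M : Setup Ω) (n : ℕ) : ℝ := (1/2) * ⨅ j : Fin (M.s n), |M.β0 n (M.idx n j)|

/-- the nonzero subvector `β_{0S}` -/
def β0S (M : Setup Ω) (n : ℕ) : EuclideanSpace ℝ (Fin (M.s n)) :=
  WithLp.toLp 2 (fun j => M.β0 n (M.idx n j))

/-- embed an `s`-dimensional vector into `ℝ^p` on the oracle coordinates `S`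
(the oracle space `B`). -/
def emb (M : Setup Ω) (n : ℕ) (βS : EuclideanSpace ℝ (Fin (M.s n))) :
    EuclideanSpace ℝ (Fin (M.p n)) :=
  WithLp.toLp 2 (fun k => ∑ j, if M.idx n j = k then βS j else 0)

/-- the restricted loss `β_S ↦ L_n(β_S, 0)` on the oracle space -/
def Lres (M : Setup Ω) (n : ℕ) (ω : Ω)
    (βS : EuclideanSpace ℝ (Fin (M.s n))) : ℝ :=
  M.L n ω (emb M n βS)

/-- the projection `𝕋` onto the oracle space: coordinates outside `S` are set to `0` -/
def Tproj (M : Setup Ω) (n : ℕ) (β : EuclideanSpace ℝ (Fin (M.p n))) :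
    EuclideanSpace ℝ (Fin (M.p n)) :=
  WithLp.toLp 2 (fun k => if k ∈ M.S n then β k else 0)

/-- Assumption 4.1 of Fan & Liao on the penalty, plus the bookkeeping for the
support `S` and its enumeration `idx`. -/
structure PenAssumptions (M : Setup Ω) : Prop where
  supp : ∀ n, ∀ j, j ∈ M.S n ↔ M.β0 n j ≠ 0
  scard : ∀ n, (M.S n).card = M.s n
  spos : ∀ n, 0 < M.s n
  idx_inj : ∀ n, Function.Injective (M.idx n)
  idx_mem : ∀ n j, M.idx n j ∈ M.S n
  pen0 : ∀ n, M.P n 0 = 0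
  pen_concave : ∀ n, ConcaveOn ℝ (Set.Ici 0) (M.P n)
  pen_mono : ∀ n, MonotoneOn (M.P n) (Set.Ici 0)
  pen_deriv : ∀ n, ∀ t : ℝ, 0 < t → HasDerivAt (M.P n) (M.P' n t) t
  pen_deriv_cont : ∀ n, ContinuousOn (M.P' n) (Set.Ioi 0)
  /-- `√s P_n'(d_n) = o(d_n)` -/
  pen_rate : Filter.Tendsto
    (fun n : ℕ => Real.sqrt (M.s n) * M.P' n (d M n) / d M n) Filter.atTop (nhds 0)
  /-- `sup_{‖β−β_{0S}‖ ≤ c d_n} η(β) = o(1)` for some `c > 0` -/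
  pen_eta : ∃ c : ℝ, 0 < c ∧ ∀ ε : ℝ, 0 < ε → ∀ᶠ n in Filter.atTop,
    ∀ β : EuclideanSpace ℝ (Fin (M.s n)), ‖β - β0S M n‖ ≤ c * d M n →
      eta (M.P' n) β ≤ ε

/-! On the event `‖β̂_S - β_{0S}‖ ≤ d_n`, whose probability tends to one because the rate of
`β̂_S` is `o(d_n)`, every coordinate satisfies `|β̂_{Sj}| ≥ |β_{0S,j}| - d_n ≥ d_n`. Concavity and
monotonicity of `P_n` make `P_n'` nonnegative and nonincreasing on `(0, ∞)`, so each coordinate of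
`P_n'(|β̂_S|) ∘ sgn(β̂_S)` is at most `P_n'(d_n)` in absolute value and the vector has norm at most
`√s P_n'(d_n)`. The `η`-term of the bound is nonnegative, so it only enlarges the bound. -/

open Set

lemma _root_.Real.limsup_nonneg {α : Type*} {f : Filter α} [f.NeBot] {u : α → ℝ}
    (h : ∀ᶠ x in f, 0 ≤ u x) : 0 ≤ limsup u f := by
  by_cases hbdd : f.IsBoundedUnder (· ≤ ·) u
  · exact le_limsup_of_frequently_le h.frequently hbdd
  · rw [Real.limsup_of_not_isBoundedUnder hbdd]

lemma _root_.Real.abs_mul_sign_le (a b : ℝ) : |a * Real.sign b| ≤ |a| := by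
  rw [abs_mul]
  refine mul_le_of_le_one_right (abs_nonneg a) ?_
  rcases Real.sign_apply_eq b with h | h | h <;> simp [h]

lemma _root_.Real.sqrt_sum_sq_le_sqrt_card_mul {ι : Type*} [Fintype ι] {y : ι → ℝ} {c : ℝ}
    (hc : 0 ≤ c) (hy : ∀ i, |y i| ≤ c) :
    √(∑ i, y i ^ 2) ≤ √(Fintype.card ι) * c := by
  have hsum : ∑ i, y i ^ 2 ≤ Fintype.card ι * c ^ 2 := by
    simpa using Finset.sum_le_card_nsmul Finset.univ (fun i => y i ^ 2) (c ^ 2)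
      fun i _ => sq_le_sq' (abs_le.1 (hy i)).1 (abs_le.1 (hy i)).2
  calc √(∑ i, y i ^ 2) ≤ √(Fintype.card ι * c ^ 2) := Real.sqrt_le_sqrt hsum
    _ = √(Fintype.card ι) * c := by rw [Real.sqrt_mul (Nat.cast_nonneg _), Real.sqrt_sq hc]

lemma _root_.ConcaveOn.antitoneOn_Ioi_of_hasDerivAt {P P' : ℝ → ℝ}
    (hconc : ConcaveOn ℝ (Ici 0) P) (hderiv : ∀ t, 0 < t → HasDerivAt P (P' t) t) :
    AntitoneOn P' (Ioi 0) := by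
  have hanti := (hconc.subset Ioi_subset_Ici_self (convex_Ioi 0)).antitoneOn_deriv
    fun t ht => (hderiv t ht).differentiableAt
  intro x hx y hy hxy
  rw [← (hderiv x hx).deriv, ← (hderiv y hy).deriv]
  exact hanti hx hy hxy

lemma _root_.HasDerivAt.nonneg_of_monotoneOn_Ici {P : ℝ → ℝ} {t P't : ℝ}
    (hderiv : HasDerivAt P P't t) (hmono : MonotoneOn P (Ici 0)) (ht : 0 < t) : 0 ≤ P't := by
  refine hderiv.hasDerivWithinAt.nonneg_of_monotoneOn ?_ hmono
  refine accPt_principal_iff_nhdsWithin.2 ((nhdsGT_neBot t).mono (nhdsWithin_mono t ?_))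
  exact fun x hx => ⟨(ht.trans hx).le, (ne_of_lt hx).symm⟩

/-- With `t₁ = |β j|` and `t₂ = |β j| + ε / 2`, an antitone `P'` contributes a nonnegative
difference quotient for every `ε > 0`; the junk values of `sSup`, `⨆` and `limsup` on unbounded
sets are `0`, so they do not spoil the sign. -/
lemma eta_nonneg {k : ℕ} {P' : ℝ → ℝ} (hanti : AntitoneOn P' (Ioi 0))
    {β : EuclideanSpace ℝ (Fin k)} (hβ : ∀ j, β j ≠ 0) : 0 ≤ eta P' β := by
  refine Real.limsup_nonneg (eventually_nhdsWithin_of_forall fun ε (hε : 0 < ε) => ?_)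
  refine Real.iSup_nonneg fun j => Real.sSup_nonneg' ?_
  have hβj : 0 < |β j| := abs_pos.2 (hβ j)
  refine ⟨_, ⟨|β j|, |β j| + ε / 2, by linarith, ⟨by linarith, by linarith⟩,
    ⟨by linarith, by linarith⟩, rfl⟩, ?_⟩
  rw [neg_nonneg]
  exact div_nonpos_of_nonpos_of_nonneg
    (sub_nonpos.2 (hanti hβj (show 0 < |β j| + ε / 2 by linarith) (by linarith))) (by linarith)

lemma IsBigOp.of_abs_le_on_threshold [IsFiniteMeasure (volume : Measure Ω)]
    {Y Z : ℕ → Ω → ℝ} {a r c : ℕ → ℝ}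
    (hY : IsBigOp Y a) (hr : ∀ n, 0 < r n) (har : Tendsto (fun n => a n / r n) atTop (𝓝 0))
    (hZ : ∀ n ω, |Y n ω| ≤ r n → |Z n ω| ≤ c n) : IsBigOp Z c := by
  intro ε hε
  obtain ⟨K, hK, hYK⟩ := hY ε hε
  have hKa : ∀ᶠ n in atTop, K * a n ≤ r n := by
    filter_upwards [har.eventually_lt_const (inv_pos.2 hK)] with n hn
    rw [div_lt_iff₀ (hr n), ← div_eq_inv_mul, lt_div_iff₀' hK] at hn
    exact hn.le
  refine ⟨1, one_pos, ?_⟩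
  filter_upwards [hYK, hKa] with n hYn hKan
  refine le_trans (ENNReal.toReal_mono (measure_ne_top _ _) (measure_mono fun ω hω => ?_)) hYn
  simp only [mem_ofPred_eq, one_mul] at hω ⊢
  by_contra! hle
  exact hω.not_ge (hZ n ω (hle.trans hKan))

lemma two_mul_d_le_abs_β0S (M : Setup Ω) (n : ℕ) (j : Fin (M.s n)) :
    2 * d M n ≤ |β0S M n j| := by
  have := ciInf_le (Set.finite_range fun j : Fin (M.s n) => |M.β0 n (M.idx n j)|).bddBelow j
  simp only [d, β0S, PiLp.toLp_apply]
  linarith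

lemma d_le_abs_of_norm_sub_β0S_le {M : Setup Ω} {n : ℕ} {β : EuclideanSpace ℝ (Fin (M.s n))}
    (hβ : ‖β - β0S M n‖ ≤ d M n) (j : Fin (M.s n)) : d M n ≤ |β j| := by
  have hj : |β j - β0S M n j| ≤ d M n := (PiLp.norm_apply_le (β - β0S M n) j).trans hβ
  have := abs_sub_abs_le_abs_sub (β0S M n j) (β j)
  rw [abs_sub_comm] at hj
  linarith [two_mul_d_le_abs_β0S M n j]

namespace PenAssumptions

variable {M : Setup Ω}

lemma d_pos (A : PenAssumptions M) (n : ℕ) : 0 < d M n := by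
  have : Nonempty (Fin (M.s n)) := ⟨⟨0, A.spos n⟩⟩
  obtain ⟨j, hj⟩ := exists_eq_ciInf_of_finite (f := fun j : Fin (M.s n) => |M.β0 n (M.idx n j)|)
  have : 0 < |M.β0 n (M.idx n j)| := abs_pos.2 ((A.supp n _).1 (A.idx_mem n j))
  rw [d, ← hj]
  positivity

lemma antitoneOn_P' (A : PenAssumptions M) (n : ℕ) : AntitoneOn (M.P' n) (Ioi 0) :=
  (A.pen_concave n).antitoneOn_Ioi_of_hasDerivAt (A.pen_deriv n)

lemma P'_nonneg (A : PenAssumptions M) (n : ℕ) {t : ℝ} (ht : 0 < t) : 0 ≤ M.P' n t :=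
  (A.pen_deriv n t ht).nonneg_of_monotoneOn_Ici (A.pen_mono n) ht

lemma sSup_eta_ball_nonneg (A : PenAssumptions M) (n : ℕ) :
    0 ≤ sSup (eta (M.P' n) '' {β | ‖β - β0S M n‖ ≤ d M n / 4}) := by
  have hd := A.d_pos n
  refine Real.sSup_nonneg' ⟨_, ⟨β0S M n, ?_, rfl⟩, eta_nonneg (A.antitoneOn_P' n) fun j h => ?_⟩
  · simp only [mem_ofPred_eq, sub_self, norm_zero]
    positivity
  · have := two_mul_d_le_abs_β0S M n j
    rw [h, abs_zero] at this
    linarith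

lemma sqrt_sum_sq_P'_mul_sign_le (A : PenAssumptions M) (n : ℕ)
    {β : EuclideanSpace ℝ (Fin (M.s n))}
    (hβ : ‖β - β0S M n‖ ≤ d M n) :
    √(∑ j, (M.P' n |β j| * Real.sign (β j)) ^ 2) ≤ √(M.s n) * M.P' n (d M n) := by
  have hd := A.d_pos n
  have hcoord (j : Fin (M.s n)) : |M.P' n |β j| * Real.sign (β j)| ≤ M.P' n (d M n) := by
    have hj := d_le_abs_of_norm_sub_β0S_le hβ j
    calc _ ≤ |M.P' n (|β j|)| := Real.abs_mul_sign_le _ _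
      _ = M.P' n |β j| := abs_of_nonneg (A.P'_nonneg n (hd.trans_le hj))
      _ ≤ M.P' n (d M n) := A.antitoneOn_P' n hd (hd.trans_le hj) hj
  simpa using Real.sqrt_sum_sq_le_sqrt_card_mul (A.P'_nonneg n hd) hcoord

end PenAssumptions

/-- **Lemma C.2** (Fan–Liao).  Under Assumption 4.1, if
`‖β̂_S − β_{0S}‖ = O_p(√(s log p/n) + √s P_n'(d_n))` with
`√(s log p/n) + √s P_n'(d_n) = o(d_n)`, then
`‖P_n'(|β̂_S|) ∘ sgn(β̂_S)‖ = O_p(sup_{‖β−β_{0S}‖≤d_n/4} η(β) √(s log p/n)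
+ √s P_n'(d_n))`. -/
theorem statement_15
    [IsProbabilityMeasure (volume : Measure Ω)]
    (M : Setup Ω) (A : PenAssumptions M)
    (βhatS : ∀ n : ℕ, Ω → EuclideanSpace ℝ (Fin (M.s n)))
    (hrate : IsBigOp (fun n ω => ‖βhatS n ω - β0S M n‖)
      (fun n : ℕ => Real.sqrt (M.s n * Real.log (M.p n) / (n:ℝ))
        + Real.sqrt (M.s n) * M.P' n (d M n)))
    (hsmall : Filter.Tendsto (fun n : ℕ =>
        (Real.sqrt (M.s n * Real.log (M.p n) / (n:ℝ))
          + Real.sqrt (M.s n) * M.P' n (d M n)) / d M n)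
      Filter.atTop (nhds 0)) :
    IsBigOp (fun n ω =>
        Real.sqrt (∑ j, (M.P' n |βhatS n ω j| * Real.sign (βhatS n ω j))^2))
      (fun n : ℕ =>
        sSup (eta (M.P' n) '' {β | ‖β - β0S M n‖ ≤ d M n / 4})
            * Real.sqrt (M.s n * Real.log (M.p n) / (n:ℝ))
          + Real.sqrt (M.s n) * M.P' n (d M n)) := by
  refine hrate.of_abs_le_on_threshold A.d_pos hsmall fun n ω hω => ?_
  rw [abs_norm] at hω
  rw [abs_of_nonneg (Real.sqrt_nonneg _)]
  calc _ ≤ √(M.s n) * M.P' n (d M n) := A.sqrt_sum_sq_P'_mul_sign_le n hω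
    _ ≤ _ := le_add_of_nonneg_left
      (mul_nonneg (A.sSup_eta_ball_nonneg n) (Real.sqrt_nonneg _))

end FanLiaoB
end
end
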